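/- arXiv:1711.04208 — 4 statements merged into one kernel-verified Lean document; each statement's English description precedes it below -/
import Mathlib

section
/- Let x_1, ..., x_d be nonnegative reals whose sum equals a natural number N. Then there exist finitely many vectors y^{(1)}, ..., y^{(m)} with natural-number entries and nonnegative weights a_1, ..., a_m summing to 1 such that: (i) for every r and every coordinate i, y^{(r)}_i equals either the floor of x_i or the ceiling of x_i; (ii) for every r, the coordinates of y^{(r)} sum to N; and (iii) sum_{r=1}^m a_r y^{(r)} = x coordinate-wise. -/
/-!
The vector `x` lies in the polytope `P = {z | ⌊x⌋ ≤ z ≤ ⌈x⌉, ∑ z = N}`. If a point of `P` has a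
fractional coordinate `z i`, then, the coordinates summing to an integer, it has a second one
`z j`; both lie strictly inside their integer bounds, so `z ± t (eᵢ - eⱼ) ∈ P` for small `t > 0`
and `z` is not extreme. Hence the extreme points of `P` are integral, there are finitely many, and
by Krein–Milman `P` is their convex hull.
-/

open Set Finset

section BoxSlice

variable {ι : Type*} [Fintype ι]

def boxSlice (lo hi : ι → ℤ) (N : ℤ) : Set (ι → ℝ) :=
  Icc (fun i => (lo i : ℝ)) (fun i => (hi i : ℝ)) ∩ {z | ∑ i, z i = N}

theorem mem_boxSlice {lo hi : ι → ℤ} {N : ℤ} {z : ι → ℝ} :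
    z ∈ boxSlice lo hi N ↔ (∀ i, (lo i : ℝ) ≤ z i ∧ z i ≤ hi i) ∧ ∑ i, z i = N := by
  simp only [boxSlice, mem_inter_iff, Set.mem_Icc, Pi.le_def, mem_ofPred_eq, forall_and]

theorem isCompact_boxSlice (lo hi : ι → ℤ) (N : ℤ) : IsCompact (boxSlice lo hi N) :=
  isCompact_Icc.inter_right <| isClosed_eq (continuous_finsetSum _ fun i _ => continuous_apply i)
    continuous_const

theorem convex_boxSlice (lo hi : ι → ℤ) (N : ℤ) : Convex ℝ (boxSlice lo hi N) :=
  (convex_Icc _ _).inter <| convex_hyperplane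
    ⟨fun _ _ => Finset.sum_add_distrib, fun _ _ => (Finset.mul_sum _ _ _).symm⟩ _

theorem exists_ne_notMem_range_intCast_of_sum_eq {z : ι → ℝ} {N : ℤ} (hsum : ∑ i, z i = N)
    {i : ι} (hi : z i ∉ range ((↑) : ℤ → ℝ)) : ∃ j ≠ i, z j ∉ range ((↑) : ℤ → ℝ) := by
  classical
  by_contra! h
  have hzi : z i = N - ∑ j ∈ univ.erase i, z j := by
    rw [← hsum, ← add_sum_erase _ _ (mem_univ i), add_sub_cancel_right]
  have : z i ∈ (Int.castAddHom ℝ).range :=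
    hzi ▸ sub_mem ⟨N, rfl⟩ (sum_mem fun j hj => h j (ne_of_mem_erase hj))
  exact hi this

theorem add_single_sub_single_mem_boxSlice [DecidableEq ι] {lo hi : ι → ℤ} {N : ℤ}
    {z : ι → ℝ} (hz : z ∈ boxSlice lo hi N) {i j : ι} (hij : i ≠ j) {t : ℝ} (ht : 0 ≤ t)
    (hti : z i + t ≤ hi i) (htj : lo j ≤ z j - t) :
    z + (Pi.single i t - Pi.single j t) ∈ boxSlice lo hi N := by
  rw [mem_boxSlice] at hz ⊢
  obtain ⟨hbox, hsum⟩ := hz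
  refine ⟨fun k => ?_, ?_⟩
  · by_cases hki : k = i
    · subst hki; simpa [hij] using ⟨by linarith [(hbox k).1], hti⟩
    by_cases hkj : k = j
    · subst hkj; simpa [hki, ← sub_eq_add_neg] using ⟨htj, by linarith [(hbox k).2]⟩
    simpa [hki, hkj] using hbox k
  · simp [sum_add_distrib, hsum]

theorem mem_range_intCast_of_mem_extremePoints_boxSlice {lo hi : ι → ℤ} {N : ℤ} {z : ι → ℝ}
    (hz : z ∈ (boxSlice lo hi N).extremePoints ℝ) (i : ι) : z i ∈ range ((↑) : ℤ → ℝ) := by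
  classical
  by_contra hzi
  obtain ⟨hbox, hsum⟩ := mem_boxSlice.1 hz.1
  obtain ⟨j, hji, hzj⟩ := exists_ne_notMem_range_intCast_of_sum_eq hsum hzi
  have hstrict (k : ι) (hk : z k ∉ range ((↑) : ℤ → ℝ)) : (lo k : ℝ) < z k ∧ z k < hi k :=
    ⟨(hbox k).1.lt_of_ne fun h => hk ⟨_, h⟩, (hbox k).2.lt_of_ne fun h => hk ⟨_, h.symm⟩⟩
  obtain ⟨hloi, hhii⟩ := hstrict i hzi
  obtain ⟨hloj, hhij⟩ := hstrict j hzj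
  set t := min (min (hi i - z i) (z i - lo i)) (min (hi j - z j) (z j - lo j))
  have ht : 0 < t := by
    simp only [t, lt_min_iff, sub_pos]; exact ⟨⟨hhii, hloi⟩, hhij, hloj⟩
  have hti₁ : t ≤ hi i - z i := (min_le_left _ _).trans (min_le_left _ _)
  have hti₂ : t ≤ z i - lo i := (min_le_left _ _).trans (min_le_right _ _)
  have htj₁ : t ≤ hi j - z j := (min_le_right _ _).trans (min_le_left _ _)
  have htj₂ : t ≤ z j - lo j := (min_le_right _ _).trans (min_le_right _ _)
  have hadd := add_single_sub_single_mem_boxSlice hz.1 (Ne.symm hji) ht.le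
    (by linarith) (by linarith)
  have hsub : z - (Pi.single i t - Pi.single j t) ∈ boxSlice lo hi N := by
    rw [sub_eq_add_neg, neg_sub]
    exact add_single_sub_single_mem_boxSlice hz.1 hji ht.le (by linarith) (by linarith)
  have hfixed := hz.2 hadd hsub (mem_openSegment_add_sub z _)
  simpa [Ne.symm hji, ht.ne'] using congrFun hfixed i

theorem finite_extremePoints_boxSlice (lo hi : ι → ℤ) (N : ℤ) :
    ((boxSlice lo hi N).extremePoints ℝ).Finite := by
  refine (Set.Finite.pi fun i => (Set.finite_Icc (lo i) (hi i)).image ((↑) : ℤ → ℝ)).subset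
    fun z hz => mem_univ_pi.2 fun i => ?_
  obtain ⟨k, hk⟩ := mem_range_intCast_of_mem_extremePoints_boxSlice hz i
  have hbox := (mem_boxSlice.1 (extremePoints_subset hz)).1 i
  rw [← hk] at hbox
  exact ⟨k, ⟨Int.cast_le.1 hbox.1, Int.cast_le.1 hbox.2⟩, hk⟩

theorem boxSlice_eq_convexHull_integerPoints (lo hi : ι → ℤ) (N : ℤ) :
    boxSlice lo hi N =
      convexHull ℝ (boxSlice lo hi N ∩ {z | ∀ i, z i ∈ range ((↑) : ℤ → ℝ)}) := by
  refine subset_antisymm ?_ (convexHull_min inter_subset_left (convex_boxSlice lo hi N))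
  calc boxSlice lo hi N
      = closure (convexHull ℝ ((boxSlice lo hi N).extremePoints ℝ)) :=
        (closure_convexHull_extremePoints (isCompact_boxSlice lo hi N)
          (convex_boxSlice lo hi N)).symm
    _ = convexHull ℝ ((boxSlice lo hi N).extremePoints ℝ) :=
        ((finite_extremePoints_boxSlice lo hi N).isCompact_convexHull (𝕜 := ℝ)).isClosed.closure_eq
    _ ⊆ _ := convexHull_mono <| subset_inter extremePoints_subset
        fun _ hz => mem_range_intCast_of_mem_extremePoints_boxSlice hz

end BoxSlice

theorem exists_fin_of_mem_convexHull {E : Type*} [AddCommGroup E] [Module ℝ E] {s : Set E}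
    {x : E} (hx : x ∈ convexHull ℝ s) :
    ∃ (m : ℕ) (z : Fin m → E) (a : Fin m → ℝ), (∀ r, 0 ≤ a r) ∧ ∑ r, a r = 1 ∧
      (∀ r, z r ∈ s) ∧ ∑ r, a r • z r = x := by
  obtain ⟨κ, _, a, z, ha, ha_sum, hz, hxz⟩ := mem_convexHull_iff_exists_fintype.1 hx
  let e := Fintype.equivFin κ
  refine ⟨Fintype.card κ, z ∘ e.symm, a ∘ e.symm, fun r => ha _, ?_, fun r => hz _, ?_⟩
  · rw [← ha_sum]; exact e.symm.sum_comp a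
  · rw [← hxz]; exact e.symm.sum_comp fun k => a k • z k

theorem Int.eq_floor_or_eq_ceil_of_floor_le_of_le_ceil {α : Type*} [Ring α] [LinearOrder α]
    [IsStrictOrderedRing α] [FloorRing α] {x : α} {k : ℤ} (h₁ : ⌊x⌋ ≤ k) (h₂ : k ≤ ⌈x⌉) :
    k = ⌊x⌋ ∨ k = ⌈x⌉ := by
  have := Int.ceil_le_floor_add_one x
  omega

theorem exists_nat_rounding_of_mem_boxSlice {ι : Type*} [Fintype ι] {x : ι → ℝ}
    (hx : ∀ i, 0 ≤ x i) {N : ℕ} {z : ι → ℝ}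
    (hz : z ∈ boxSlice (fun i => ⌊x i⌋) (fun i => ⌈x i⌉) N)
    (hint : ∀ i, z i ∈ range ((↑) : ℤ → ℝ)) :
    ∃ y : ι → ℕ, (∀ i, (y i : ℤ) = ⌊x i⌋ ∨ (y i : ℤ) = ⌈x i⌉) ∧ ∑ i, y i = N ∧
      ∀ i, (y i : ℝ) = z i := by
  obtain ⟨hbox, hsum⟩ := mem_boxSlice.1 hz
  choose k hk using hint
  have hfloor (i : ι) : ⌊x i⌋ ≤ k i := Int.cast_le.1 <| (hk i).symm ▸ (hbox i).1
  have hceil (i : ι) : k i ≤ ⌈x i⌉ := Int.cast_le.1 <| (hk i).symm ▸ (hbox i).2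
  have htoNat (i : ι) : ((k i).toNat : ℤ) = k i :=
    Int.toNat_of_nonneg <| (Int.floor_nonneg.2 (hx i)).trans (hfloor i)
  have hcast (i : ι) : ((k i).toNat : ℝ) = z i := by
    rw [← hk i, ← Int.cast_natCast, htoNat]
  refine ⟨fun i => (k i).toNat, fun i => ?_, ?_, hcast⟩
  · rw [htoNat]; exact Int.eq_floor_or_eq_ceil_of_floor_le_of_le_ceil (hfloor i) (hceil i)
  · exact_mod_cast (Finset.sum_congr rfl fun i _ => hcast i).trans hsum

/-- Comb sampling guarantee, stated deterministically: a nonnegative vector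
whose coordinates sum to a natural number `N` is a convex combination of
natural-number-valued vectors, each obtained by rounding every coordinate up
or down, and each summing to `N`. -/
theorem comb_sampling_decomposition
    (d : ℕ) (x : Fin d → ℝ) (hx : ∀ i, 0 ≤ x i)
    (N : ℕ) (hsum : ∑ i, x i = (N : ℝ)) :
    ∃ (m : ℕ) (y : Fin m → (Fin d → ℕ)) (a : Fin m → ℝ),
      (∀ r, 0 ≤ a r) ∧ (∑ r, a r = 1) ∧
      (∀ r i, ((y r i : ℤ) = ⌊x i⌋ ∨ (y r i : ℤ) = ⌈x i⌉)) ∧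
      (∀ r, ∑ i, y r i = N) ∧
      (∀ i, ∑ r, a r * (y r i : ℝ) = x i) := by
  have hx_mem : x ∈ boxSlice (fun i => ⌊x i⌋) (fun i => ⌈x i⌉) N :=
    mem_boxSlice.2 ⟨fun i => ⟨Int.floor_le _, Int.le_ceil _⟩, mod_cast hsum⟩
  rw [boxSlice_eq_convexHull_integerPoints] at hx_mem
  obtain ⟨m, z, a, ha, ha_sum, hz, hxz⟩ := exists_fin_of_mem_convexHull hx_mem
  choose y hy_round hy_sum hyz using
    fun r => exists_nat_rounding_of_mem_boxSlice hx (hz r).1 (hz r).2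
  refine ⟨m, y, a, ha, ha_sum, hy_round, hy_sum, fun i => ?_⟩
  simp only [hyz, ← hxz, Finset.sum_apply, Pi.smul_apply, smul_eq_mul]
end

section
/- Let k >= 2 be a natural number and let p_1, ..., p_k be reals with 0 <= p_i <= 1 for all i and p_1 + ... + p_k <= 1. Then sum_{i=1}^k p_i * (1 - prod_{i' != i} (1 - p_{i'})) <= 1 - 1/k. -/
open scoped BigOperators

lemma weierstrass_aux {ι : Type*} [DecidableEq ι] (s : Finset ι) (f : ι → ℝ)
    (h0 : ∀ i ∈ s, 0 ≤ f i) (h1 : ∀ i ∈ s, f i ≤ 1) :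
    1 - ∑ i ∈ s, f i ≤ ∏ i ∈ s, (1 - f i) := by
  induction s using Finset.induction with
  | empty => simp
  | @insert a s hnot ih =>
    rw [Finset.sum_insert hnot, Finset.prod_insert hnot]
    have hs0 : ∀ i ∈ s, 0 ≤ f i := fun i hi => h0 i (Finset.mem_insert_of_mem hi)
    have hs1 : ∀ i ∈ s, f i ≤ 1 := fun i hi => h1 i (Finset.mem_insert_of_mem hi)
    have ha0 := h0 a (Finset.mem_insert_self a s)
    have ha1 := h1 a (Finset.mem_insert_self a s)
    have hsum0 : 0 ≤ ∑ i ∈ s, f i := Finset.sum_nonneg hs0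
    have := ih hs0 hs1
    nlinarith [this, mul_nonneg ha0 hsum0]

/-- Bound on the infeasibility probability in the FAMS rounding analysis:
if `0 ≤ p i ≤ 1` and `∑ p i ≤ 1`, then
`∑ i, p i * (1 - ∏_{i' ≠ i} (1 - p i')) ≤ 1 - 1/k`. -/
theorem fams_infeasibility_probability_bound
    (k : ℕ) (hk : 2 ≤ k) (p : Fin k → ℝ)
    (hp0 : ∀ i, 0 ≤ p i) (hp1 : ∀ i, p i ≤ 1)
    (hsum : ∑ i, p i ≤ 1) :
    ∑ i, p i * (1 - ∏ i' ∈ Finset.univ.erase i, (1 - p i')) ≤ 1 - 1 / (k : ℝ) := by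
  set S := ∑ i, p i with hS
  have hS0 : 0 ≤ S := Finset.sum_nonneg fun i _ => hp0 i
  have hterm : ∀ i : Fin k, p i * (1 - ∏ i' ∈ Finset.univ.erase i, (1 - p i'))
      ≤ p i * (S - p i) := by
    intro i
    have hw := weierstrass_aux (Finset.univ.erase i) p (fun j _ => hp0 j) (fun j _ => hp1 j)
    have hsum_erase : ∑ j ∈ Finset.univ.erase i, p j = S - p i := by
      rw [hS, ← Finset.sum_erase_add Finset.univ p (Finset.mem_univ i)]; ring
    have : 1 - ∏ i' ∈ Finset.univ.erase i, (1 - p i') ≤ S - p i := by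
      rw [← hsum_erase]; linarith [hw]
    exact mul_le_mul_of_nonneg_left this (hp0 i)
  calc ∑ i, p i * (1 - ∏ i' ∈ Finset.univ.erase i, (1 - p i'))
      ≤ ∑ i, p i * (S - p i) := Finset.sum_le_sum fun i _ => hterm i
    _ = S ^ 2 - ∑ i, (p i) ^ 2 := by
        simp_rw [mul_sub, Finset.sum_sub_distrib, ← Finset.sum_mul, ← hS, sq]
    _ ≤ S ^ 2 - S ^ 2 / k := by
        have hcs : S ^ 2 ≤ (k : ℝ) * ∑ i, (p i) ^ 2 := by
          have := sq_sum_le_card_mul_sum_sq (s := (Finset.univ : Finset (Fin k))) (f := p)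
          simpa using this
        have hk0 : (0:ℝ) < k := by positivity
        have : S ^ 2 / k ≤ ∑ i, (p i) ^ 2 := by
          rw [div_le_iff₀ hk0]; linarith [hcs]
        linarith
    _ = S ^ 2 * (1 - 1 / k) := by field_simp
    _ ≤ 1 - 1 / k := by
        have hS1 : S ≤ 1 := hsum
        have h1 : 0 ≤ 1 - 1 / (k : ℝ) := by
          have : (1:ℝ) ≤ k := by exact_mod_cast Nat.one_le_of_lt hk
          have : 1 / (k : ℝ) ≤ 1 := by
            rw [div_le_one (by linarith)]; linarith
          linarith
        have hS2 : S ^ 2 ≤ 1 := by nlinarith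
        nlinarith [mul_le_mul_of_nonneg_right hS2 h1]
end

section
/- Let S_1, ..., S_q be subsets of {1, ..., d} with real bounds n_i <= N_i, and define MgS = { x in R^d : x >= 0 and n_i <= sum_{j in S_i} x_j <= N_i for all i }. Let P be a finite subset of MgS. Let T be a nonempty finite set of targets; for each t in T let w_t in R^d and define coverage c_t(x) = w_t · x and utility U_t(x) = c_t(x) * Us_t + (1 - c_t(x)) * Uu_t, where Us_t >= Uu_t >= 0. Assume c_t(x) >= 0 for all x in MgS and all t. Let gamma >= 1, let x_m in MgS attain the maximum over MgS of min_{t in T} U_t(x), and suppose x' in conv(P) satisfies c_t(x') >= c_t(x_m)/gamma for all t in T. Then min_{t in T} U_t(x') >= (1/gamma) * sup over x in conv(P) of min_{t in T} U_t(x). -/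
open scoped BigOperators

/-- Abstract approximation guarantee (Theorem 4): if the rounded mixed strategy
`x'` has coverage of every target at least `1/γ` times the coverage under the
marginal optimum `x_m`, then the worst-case utility of `x'` is at least `1/γ`
times the Strong Stackelberg equilibrium value `sup_{x ∈ conv(P)} min_t U_t(x)`. -/
theorem marginal_guided_rounding_approximation
    (d q : ℕ) (S : Fin q → Finset (Fin d)) (n N : Fin q → ℝ)
    (hnN : ∀ i, n i ≤ N i)
    (MgS : Set (Fin d → ℝ))
    (hMgS : MgS = {x | (∀ j, 0 ≤ x j) ∧
      ∀ i, n i ≤ ∑ j ∈ S i, x j ∧ ∑ j ∈ S i, x j ≤ N i})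
    (P : Finset (Fin d → ℝ)) (hP : ↑P ⊆ MgS)
    (T : Type*) [Fintype T] [Nonempty T]
    (w : T → Fin d → ℝ) (Us Uu : T → ℝ)
    (hUu : ∀ t, 0 ≤ Uu t) (hUs : ∀ t, Uu t ≤ Us t)
    (c : T → (Fin d → ℝ) → ℝ)
    (hc : ∀ t x, c t x = ∑ j, w t j * x j)
    (hcpos : ∀ x ∈ MgS, ∀ t, 0 ≤ c t x)
    (U : T → (Fin d → ℝ) → ℝ)
    (hU : ∀ t x, U t x = c t x * Us t + (1 - c t x) * Uu t)
    (γ : ℝ) (hγ : 1 ≤ γ)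
    (xm : Fin d → ℝ) (hxm : xm ∈ MgS)
    (hopt : ∀ x ∈ MgS, (Finset.univ.inf' Finset.univ_nonempty fun t => U t x) ≤
      Finset.univ.inf' Finset.univ_nonempty fun t => U t xm)
    (x' : Fin d → ℝ) (hx' : x' ∈ convexHull ℝ (↑P : Set (Fin d → ℝ)))
    (hcov : ∀ t, c t xm / γ ≤ c t x') :
    (1 / γ) * sSup {v : ℝ | ∃ x ∈ convexHull ℝ (↑P : Set (Fin d → ℝ)),
        v = Finset.univ.inf' Finset.univ_nonempty fun t => U t x} ≤
      Finset.univ.inf' Finset.univ_nonempty fun t => U t x' := by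
  have hγ0 : (0:ℝ) < γ := lt_of_lt_of_le one_pos hγ
  -- MgS is convex
  have hconv : Convex ℝ MgS := by
    subst hMgS
    intro x hx y hy a b ha hb hab
    refine ⟨fun j => by
      have := hx.1 j; have := hy.1 j
      have : 0 ≤ a * x j + b * y j := by positivity
      simpa using this, fun i => ?_⟩
    have hx2 := hx.2 i
    have hy2 := hy.2 i
    have hsum : ∑ j ∈ S i, (a • x + b • y) j = a * ∑ j ∈ S i, x j + b * ∑ j ∈ S i, y j := by
      simp [Finset.mul_sum, Finset.sum_add_distrib]
    constructor
    · rw [hsum]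
      calc n i = a * n i + b * n i := by rw [← add_mul, hab, one_mul]
        _ ≤ _ := add_le_add (mul_le_mul_of_nonneg_left hx2.1 ha)
            (mul_le_mul_of_nonneg_left hy2.1 hb)
    · rw [hsum]
      calc a * ∑ j ∈ S i, x j + b * ∑ j ∈ S i, y j
          ≤ a * N i + b * N i := add_le_add (mul_le_mul_of_nonneg_left hx2.2 ha)
            (mul_le_mul_of_nonneg_left hy2.2 hb)
        _ = N i := by rw [← add_mul, hab, one_mul]
  have hsub : convexHull ℝ (↑P : Set (Fin d → ℝ)) ⊆ MgS := convexHull_min hP hconv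
  -- the sup is bounded by min U xm
  have hbd : ∀ v ∈ {v : ℝ | ∃ x ∈ convexHull ℝ (↑P : Set (Fin d → ℝ)),
      v = Finset.univ.inf' Finset.univ_nonempty fun t => U t x},
      v ≤ Finset.univ.inf' Finset.univ_nonempty fun t => U t xm := by
    rintro v ⟨x, hx, rfl⟩
    exact hopt x (hsub hx)
  have hne : ∃ v, v ∈ {v : ℝ | ∃ x ∈ convexHull ℝ (↑P : Set (Fin d → ℝ)),
      v = Finset.univ.inf' Finset.univ_nonempty fun t => U t x} :=
    ⟨_, x', hx', rfl⟩
  have hsup : sSup {v : ℝ | ∃ x ∈ convexHull ℝ (↑P : Set (Fin d → ℝ)),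
      v = Finset.univ.inf' Finset.univ_nonempty fun t => U t x} ≤
      Finset.univ.inf' Finset.univ_nonempty fun t => U t xm :=
    csSup_le hne hbd
  refine le_trans (mul_le_mul_of_nonneg_left hsup (by positivity)) ?_
  rw [Finset.le_inf'_iff]
  intro t _
  have h1 : (1/γ) * (Finset.univ.inf' Finset.univ_nonempty fun t => U t xm) ≤
      (1/γ) * U t xm :=
    mul_le_mul_of_nonneg_left (Finset.inf'_le _ (Finset.mem_univ t)) (by positivity)
  refine le_trans h1 ?_
  rw [hU t xm, hU t x']
  have hcm : 0 ≤ c t xm := hcpos xm hxm t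
  have hct := hcov t
  have hUst := hUs t
  have hUut := hUu t
  have key : Uu t + c t x' * (Us t - Uu t) ≥ (1/γ) * (Uu t + c t xm * (Us t - Uu t)) := by
    have h2 : c t xm / γ * (Us t - Uu t) ≤ c t x' * (Us t - Uu t) :=
      mul_le_mul_of_nonneg_right hct (by linarith)
    have h3 : (1/γ) * Uu t ≤ Uu t := by
      rw [div_mul_eq_mul_div, one_mul, div_le_iff₀ hγ0]
      nlinarith
    have : (1/γ) * (Uu t + c t xm * (Us t - Uu t)) =
        (1/γ) * Uu t + c t xm / γ * (Us t - Uu t) := by ring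
    rw [this]
    linarith
  nlinarith [key]
end

section
/- Let I be a finite index set, let H be a finite family of subsets of I, and suppose H = H_1 union H_2 where each H_i is laminar, i.e., for all S, S' in H_i, either S is a subset of S', or S' is a subset of S, or S and S' are disjoint (such H is called bi-hierarchical). For each S in H let n_S <= N_S be natural numbers, and define the marginal polytope MgS = { x : I -> R : x(i) >= 0 for all i, and n_S <= sum_{i in S} x(i) <= N_S for all S in H }. Assume MgS is bounded. Let P be the set of integer-valued points of MgS. Then MgS equals the convex hull of P; in particular every marginal strategy is implementable as a mixed strategy over pure strategies. -/
/-!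
The marginal polytope is compact and convex, so by Krein–Milman it is the closed convex hull of
its extreme points, and its integer points are finitely many; it therefore suffices to show that
every extreme point `y` is integral. Otherwise let `F` be the set of fractional coordinates of `y`.
In each laminar family, the members with integral sum cut `F` into blocks (each element goes to
the smallest such member containing it); block sums of `y` are integral, so every nonempty block
has at least two elements. Two families of disjoint blocks of size at least two inside `F` impose
fewer than `|F|` independent linear conditions (at most `|F|` conditions, and `|F|` only when both
families partition `F`, which makes them dependent). So some `d ≠ 0` supported on `F` sums to
zero over every block, and thus over every constraint that is tight at `y`; then `y ± t d` stays
in the polytope for small `t > 0`, contradicting extremality.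
-/

open Finset Filter Topology

/-- A family of subsets is laminar if any two of its members are nested or
disjoint. -/
def Laminar {I : Type*} (H : Finset (Finset I)) : Prop :=
  ∀ S ∈ H, ∀ S' ∈ H, S ⊆ S' ∨ S' ⊆ S ∨ Disjoint S S'

theorem Laminar.mono {I : Type*} {H T : Finset (Finset I)} (hH : Laminar H) (hT : T ⊆ H) :
    Laminar T :=
  fun S hS S' hS' => hH S (hT hS) S' (hT hS')

section MinimalBlock

variable {I : Type*} [DecidableEq I] (T : Finset (Finset I)) (F : Finset I)

def minimalBlock (S : Finset I) : Finset I :=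
  (S ∩ F).filter fun i => ∀ S' ∈ T, i ∈ S' → S ⊆ S'

theorem minimalBlock_subset (S : Finset I) : minimalBlock T F S ⊆ S ∩ F :=
  filter_subset _ _

theorem pairwiseDisjoint_minimalBlock :
    (T : Set (Finset I)).PairwiseDisjoint (minimalBlock T F) := by
  intro S hS S' hS' hne
  refine disjoint_left.2 fun i hi hi' => hne ?_
  exact (mem_filter.1 hi).2 S' hS' (mem_of_mem_inter_left (mem_filter.1 hi').1) |>.antisymm
    ((mem_filter.1 hi').2 S hS (mem_of_mem_inter_left (mem_filter.1 hi).1))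

variable {T F}

theorem Laminar.biUnion_minimalBlock (hT : Laminar T) {S : Finset I} (hS : S ∈ T) :
    (T.filter (· ⊆ S)).biUnion (minimalBlock T F) = S ∩ F := by
  refine (biUnion_subset.2 fun S' hS' => (minimalBlock_subset T F S').trans
    (inter_subset_inter_right (mem_filter.1 hS').2)).antisymm fun i hi => ?_
  obtain ⟨hiS, hiF⟩ := mem_inter.1 hi
  obtain ⟨S₀, hS₀, hmin⟩ := exists_min_image (T.filter (i ∈ ·)) card ⟨S, mem_filter.2 ⟨hS, hiS⟩⟩
  obtain ⟨hS₀T, hiS₀⟩ := mem_filter.1 hS₀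
  have hS₀_le : ∀ S' ∈ T, i ∈ S' → S₀ ⊆ S' := fun S' hS' hiS' => by
    rcases hT S₀ hS₀T S' hS' with h | h | h
    · exact h
    · exact (eq_of_subset_of_card_le h (hmin S' (mem_filter.2 ⟨hS', hiS'⟩))).ge
    · exact absurd hiS' (disjoint_left.1 h hiS₀)
  exact mem_biUnion.2 ⟨S₀, mem_filter.2 ⟨hS₀T, hS₀_le S hS hiS⟩,
    mem_filter.2 ⟨mem_inter.2 ⟨hiS₀, hiF⟩, hS₀_le⟩⟩

theorem Laminar.sum_minimalBlock_mem {M : Type*} [AddCommGroup M] (G : AddSubgroup M)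
    (hT : Laminar T) {y : I → M} (hy : ∀ S ∈ T, ∑ i ∈ S ∩ F, y i ∈ G) {S : Finset I}
    (hS : S ∈ T) : ∑ i ∈ minimalBlock T F S, y i ∈ G := by
  induction S using strongInduction with
  | H S ih =>
  have hSS : S ∈ T.filter (· ⊆ S) := mem_filter.2 ⟨hS, subset_rfl⟩
  have hsplit := sum_biUnion (f := y) ((pairwiseDisjoint_minimalBlock T F).subset
    (coe_subset.2 (filter_subset (· ⊆ S) T)))
  rw [hT.biUnion_minimalBlock hS, ← add_sum_erase _ _ hSS] at hsplit
  rw [eq_sub_of_add_eq hsplit.symm]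
  refine sub_mem (hy S hS) (sum_mem fun S' hS' => ?_)
  obtain ⟨hne, hS'⟩ := mem_erase.1 hS'
  obtain ⟨hS'T, hS'S⟩ := mem_filter.1 hS'
  exact ih S' (ssubset_of_subset_of_ne hS'S hne) hS'T

theorem Laminar.two_le_card_minimalBlock {M : Type*} [AddCommGroup M] (G : AddSubgroup M)
    (hT : Laminar T) {y : I → M} (hyF : ∀ i ∈ F, y i ∉ G)
    (hy : ∀ S ∈ T, ∑ i ∈ S ∩ F, y i ∈ G) {S : Finset I} (hS : S ∈ T)
    (hne : (minimalBlock T F S).Nonempty) : 2 ≤ (minimalBlock T F S).card := by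
  by_contra! hlt
  have := hne.card_pos
  obtain ⟨i, hi⟩ := card_eq_one.1 (show (minimalBlock T F S).card = 1 by omega)
  have hiF : i ∈ F :=
    mem_of_mem_inter_right (minimalBlock_subset T F S (hi ▸ mem_singleton_self i))
  have := hT.sum_minimalBlock_mem G hy hS
  rw [hi, sum_singleton] at this
  exact hyF i hiF this

theorem Laminar.sum_eq_zero_of_sum_minimalBlock_eq_zero {R : Type*} [AddCommMonoid R]
    (hT : Laminar T) {d : I → R} (hdF : ∀ i ∉ F, d i = 0)
    (hd : ∀ S ∈ T, (minimalBlock T F S).Nonempty → ∑ i ∈ minimalBlock T F S, d i = 0)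
    {S : Finset I} (hS : S ∈ T) : ∑ i ∈ S, d i = 0 := by
  rw [← sum_inter_add_sum_sdiff S F, sum_eq_zero fun i hi => hdF i (mem_sdiff.1 hi).2, add_zero,
    ← hT.biUnion_minimalBlock hS, sum_biUnion ((pairwiseDisjoint_minimalBlock T F).subset
      (coe_subset.2 (filter_subset _ T)))]
  refine sum_eq_zero fun S' hS' => ?_
  obtain hne | hempty := (minimalBlock T F S').eq_empty_or_nonempty
  · rw [hne, sum_empty]
  · exact hd S' (mem_filter.1 hS').1 hempty

end MinimalBlock

section Dimension

variable {K : Type*} [Field K] {I : Type*} [Fintype I] [DecidableEq I] {ι : Type*}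

theorem exists_ne_zero_sum_eq_zero_of_card_lt {F : Finset I} {s : Finset ι} (B : ι → Finset I)
    (h : s.card < F.card) :
    ∃ d : I → K, d ≠ 0 ∧ (∀ i ∉ F, d i = 0) ∧ ∀ k ∈ s, ∑ i ∈ B k, d i = 0 := by
  let Φ : (I → K) →ₗ[K] (s → K) × (↥Fᶜ → K) :=
    (LinearMap.pi fun k : s => ∑ i ∈ B k, LinearMap.proj i).prod
      (LinearMap.pi fun i : ↥Fᶜ => LinearMap.proj i.1)
  have hdim : Module.finrank K ((s → K) × (↥Fᶜ → K)) < Module.finrank K (I → K) := by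
    simp only [Module.finrank_prod, Module.finrank_fintype_fun_eq_card, Fintype.card_coe,
      card_compl]
    have := F.card_le_univ
    omega
  obtain ⟨d, hd, hd0⟩ :=
    (Submodule.ne_bot_iff _).1 (LinearMap.ker_ne_bot_of_finrank_lt (f := Φ) hdim)
  have hΦ := LinearMap.mem_ker.1 hd
  refine ⟨d, hd0, fun i hi => ?_, fun k hk => ?_⟩
  · simpa [Φ] using congr_fun (congr_arg Prod.snd hΦ) ⟨i, mem_compl.2 hi⟩
  · simpa [Φ] using congr_fun (congr_arg Prod.fst hΦ) ⟨k, hk⟩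

omit [Fintype I] in
theorem two_mul_card_le_card_biUnion {s : Finset ι} {B : ι → Finset I}
    (hB : (s : Set ι).PairwiseDisjoint B) (h2 : ∀ k ∈ s, 2 ≤ (B k).card) :
    2 * s.card ≤ (s.biUnion B).card := by
  rw [card_biUnion hB, mul_comm, ← smul_eq_mul, ← sum_const]
  exact sum_le_sum h2

variable {ι' : Type*}

theorem exists_ne_zero_sum_eq_zero_of_pairwiseDisjoint {F : Finset I} (hF : F.Nonempty)
    {s : Finset ι} {B : ι → Finset I} (hB : (s : Set ι).PairwiseDisjoint B)
    (hBF : ∀ k ∈ s, B k ⊆ F) (hB2 : ∀ k ∈ s, 2 ≤ (B k).card)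
    {s' : Finset ι'} {B' : ι' → Finset I} (hB' : (s' : Set ι').PairwiseDisjoint B')
    (hB'F : ∀ k ∈ s', B' k ⊆ F) (hB'2 : ∀ k ∈ s', 2 ≤ (B' k).card) :
    ∃ d : I → K, d ≠ 0 ∧ (∀ i ∉ F, d i = 0) ∧
      (∀ k ∈ s, ∑ i ∈ B k, d i = 0) ∧ ∀ k ∈ s', ∑ i ∈ B' k, d i = 0 := by
  classical
  have hc := two_mul_card_le_card_biUnion hB hB2
  have hc' := two_mul_card_le_card_biUnion hB' hB'2
  have hsub := card_le_card (biUnion_subset.2 hBF)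
  have hsub' := card_le_card (biUnion_subset.2 hB'F)
  rcases lt_or_ge (s.card + s'.card) F.card with hlt | hge
  · obtain ⟨d, hd0, hdF, hd⟩ :=
      exists_ne_zero_sum_eq_zero_of_card_lt (K := K) (Sum.elim B B') (card_disjSum s s' ▸ hlt)
    exact ⟨d, hd0, hdF, fun k hk => hd (.inl k) (inl_mem_disjSum.2 hk),
      fun k hk => hd (.inr k) (inr_mem_disjSum.2 hk)⟩
  -- Now both families partition `F`, so one block sum of `B'` is determined by the others.
  have hcover : s.biUnion B = F := eq_of_subset_of_card_le (biUnion_subset.2 hBF) (by omega)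
  have hcover' : s'.biUnion B' = F := eq_of_subset_of_card_le (biUnion_subset.2 hB'F) (by omega)
  obtain ⟨k₀, hk₀⟩ : s'.Nonempty := card_pos.1 (by have := hF.card_pos; omega)
  obtain ⟨d, hd0, hdF, hd⟩ := exists_ne_zero_sum_eq_zero_of_card_lt (K := K) (F := F)
    (s := s.disjSum (s'.erase k₀)) (Sum.elim B B') (by
      rw [card_disjSum, card_erase_of_mem hk₀]
      have := hF.card_pos
      omega)
  have hds : ∀ k ∈ s, ∑ i ∈ B k, d i = 0 := fun k hk => hd (.inl k) (inl_mem_disjSum.2 hk)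
  have hds' : ∀ k ∈ s'.erase k₀, ∑ i ∈ B' k, d i = 0 :=
    fun k hk => hd (.inr k) (inr_mem_disjSum.2 hk)
  refine ⟨d, hd0, hdF, hds, fun k hk => ?_⟩
  obtain rfl | hne := eq_or_ne k k₀
  · calc ∑ i ∈ B' k, d i = ∑ i ∈ F, d i := by
          rw [← hcover', sum_biUnion hB', ← add_sum_erase _ _ hk, sum_eq_zero hds', add_zero]
      _ = 0 := by rw [← hcover, sum_biUnion hB, sum_eq_zero hds]
  · exact hds' k (mem_erase.2 ⟨hne, hk⟩)

end Dimension

theorem Laminar.exists_ne_zero_sum_eq_zero {K : Type*} [Field K] {I : Type*} [Fintype I]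
    [DecidableEq I] {M : Type*} [AddCommGroup M] (G : AddSubgroup M)
    {H₁ H₂ : Finset (Finset I)} (hH₁ : Laminar H₁) (hH₂ : Laminar H₂) {y : I → M}
    (hy : ∃ i, y i ∉ G) :
    ∃ d : I → K, d ≠ 0 ∧ (∀ i, y i ∈ G → d i = 0) ∧
      ∀ S ∈ H₁ ∪ H₂, ∑ i ∈ S, y i ∈ G → ∑ i ∈ S, d i = 0 := by
  classical
  set F := univ.filter (y · ∉ G)
  have hF : F.Nonempty := by simpa [F, filter_nonempty_iff] using hy
  have hyF : ∀ i, i ∈ F ↔ y i ∉ G := by simp [F]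
  let T (H : Finset (Finset I)) := H.filter (∑ i ∈ ·, y i ∈ G)
  let s (H : Finset (Finset I)) := (T H).filter fun S => (minimalBlock (T H) F S).Nonempty
  have hTF (H : Finset (Finset I)) : ∀ S ∈ T H, ∑ i ∈ S ∩ F, y i ∈ G := fun S hS => by
    rw [eq_sub_of_add_eq (sum_inter_add_sum_sdiff S F y)]
    exact sub_mem (mem_filter.1 hS).2
      (sum_mem fun i hi => not_not.1 ((hyF i).not.1 (mem_sdiff.1 hi).2))
  have hdisj (H : Finset (Finset I)) :
      (s H : Set (Finset I)).PairwiseDisjoint (minimalBlock (T H) F) :=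
    (pairwiseDisjoint_minimalBlock _ F).subset (coe_subset.2 (filter_subset _ _))
  have hsubF (H : Finset (Finset I)) : ∀ S ∈ s H, minimalBlock (T H) F S ⊆ F :=
    fun S _ => (minimalBlock_subset _ F S).trans inter_subset_right
  have htwo {H : Finset (Finset I)} (hH : Laminar H) :
      ∀ S ∈ s H, 2 ≤ (minimalBlock (T H) F S).card := fun S hS =>
    (hH.mono (filter_subset _ _)).two_le_card_minimalBlock G (fun i => (hyF i).1) (hTF H)
      (mem_filter.1 hS).1 (mem_filter.1 hS).2
  obtain ⟨d, hd0, hdF, hd₁, hd₂⟩ := exists_ne_zero_sum_eq_zero_of_pairwiseDisjoint (K := K) hF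
    (hdisj H₁) (hsubF H₁) (htwo hH₁) (hdisj H₂) (hsubF H₂) (htwo hH₂)
  have hzero {H : Finset (Finset I)} (hH : Laminar H)
      (hd : ∀ S ∈ s H, ∑ i ∈ minimalBlock (T H) F S, d i = 0) :
      ∀ S ∈ H, ∑ i ∈ S, y i ∈ G → ∑ i ∈ S, d i = 0 := fun S hS hyS =>
    (hH.mono (filter_subset _ _)).sum_eq_zero_of_sum_minimalBlock_eq_zero hdF
      (fun S' hS' hne => hd S' (mem_filter.2 ⟨hS', hne⟩)) (mem_filter.2 ⟨hS, hyS⟩)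
  refine ⟨d, hd0, fun i hi => hdF i fun hiF => (hyF i).1 hiF hi, fun S hS => ?_⟩
  rcases mem_union.1 hS with hS | hS
  exacts [hzero hH₁ hd₁ S hS, hzero hH₂ hd₂ S hS]

theorem notMem_extremePoints_of_eventually {E : Type*} [AddCommGroup E] [Module ℝ E]
    {A : Set E} {x v : E} (hv : v ≠ 0) (h : ∀ᶠ t in 𝓝 (0 : ℝ), x + t • v ∈ A) :
    x ∉ A.extremePoints ℝ := by
  intro hx
  obtain ⟨ε, hε, hball⟩ := Metric.eventually_nhds_iff.1 h
  have hmem (t : ℝ) (ht : |t| < ε) : x + t • v ∈ A := hball (by simpa using ht)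
  have hε' : |ε / 2| < ε := by rw [abs_of_pos (half_pos hε)]; linarith
  have hseg : x ∈ openSegment ℝ (x + (-(ε / 2)) • v) (x + (ε / 2) • v) :=
    ⟨1 / 2, 1 / 2, one_half_pos, one_half_pos, add_halves 1, by module⟩
  have := (mem_extremePoints.1 hx).2 _ (hmem _ (by rwa [abs_neg])) _ (hmem _ hε') hseg
  exact hv (smul_right_injective E (half_pos hε).ne' (by simpa using this.2))

theorem eventually_le_add_mul {a b c : ℝ} (hab : a ≤ b) (hc : a = b → c = 0) :
    ∀ᶠ t in 𝓝 (0 : ℝ), a ≤ b + t * c := by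
  obtain hlt | rfl := hab.lt_or_eq
  · have : Tendsto (fun t : ℝ => b + t * c) (𝓝 0) (𝓝 (b + 0 * c)) :=
      tendsto_const_nhds.add (tendsto_id.mul_const c)
    rw [zero_mul, add_zero] at this
    exact (this.eventually_const_lt hlt).mono fun _ => le_of_lt
  · simp [hc rfl]

/-- The paper's `MgS`. -/
def marginalPolytope {I : Type*} (H : Finset (Finset I)) (n N : Finset I → ℕ) : Set (I → ℝ) :=
  {x | (∀ i, 0 ≤ x i) ∧ ∀ S ∈ H, (n S : ℝ) ≤ ∑ i ∈ S, x i ∧ ∑ i ∈ S, x i ≤ (N S : ℝ)}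

section MarginalPolytope

variable {I : Type*} (H : Finset (Finset I)) (n N : Finset I → ℕ)

theorem convex_marginalPolytope : Convex ℝ (marginalPolytope H n N) := by
  have hsum (S : Finset I) : IsLinearMap ℝ fun x : I → ℝ => ∑ i ∈ S, x i :=
    ⟨fun x y => by simp [sum_add_distrib], fun c x => by simp [mul_sum]⟩
  simp only [marginalPolytope, Set.ofPred_and, Set.ofPred_forall]
  exact (convex_iInter fun i => convex_halfSpace_ge (LinearMap.proj i).isLinear 0).inter
    (convex_iInter fun S => convex_iInter fun _ =>
      (convex_halfSpace_ge (hsum S) _).inter (convex_halfSpace_le (hsum S) _))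

theorem isClosed_marginalPolytope : IsClosed (marginalPolytope H n N) := by
  simp only [marginalPolytope, Set.ofPred_and, Set.ofPred_forall]
  refine (isClosed_iInter fun i => isClosed_le continuous_const (continuous_apply i)).inter
    (isClosed_iInter fun S => isClosed_iInter fun _ =>
      (isClosed_le ?_ ?_).inter (isClosed_le ?_ ?_))
  all_goals fun_prop

variable {H n N}

theorem eventually_add_smul_mem_marginalPolytope [Finite I] {y d : I → ℝ}
    (hy : y ∈ marginalPolytope H n N)
    (hd : ∀ i, y i = 0 → d i = 0)
    (hdS : ∀ S ∈ H, (∑ i ∈ S, y i = n S ∨ ∑ i ∈ S, y i = N S) → ∑ i ∈ S, d i = 0) :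
    ∀ᶠ t in 𝓝 (0 : ℝ), y + t • d ∈ marginalPolytope H n N := by
  have hsum (t : ℝ) (S : Finset I) :
      ∑ i ∈ S, (y + t • d) i = ∑ i ∈ S, y i + t * ∑ i ∈ S, d i := by
    simp [sum_add_distrib, mul_sum]
  refine (eventually_all.2 fun i => ?_).and ((eventually_all_finset H).2 fun S hS => ?_)
  · simpa using eventually_le_add_mul (hy.1 i) fun h => hd i h.symm
  · simp only [hsum]
    refine (eventually_le_add_mul (hy.2 S hS).1 fun h => hdS S hS (.inl h.symm)).and ?_
    have := eventually_le_add_mul (c := -∑ i ∈ S, d i) (neg_le_neg (hy.2 S hS).2) fun h => by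
      rw [hdS S hS (.inr (neg_inj.1 h).symm), neg_zero]
    exact this.mono fun t ht => by linarith

end MarginalPolytope

theorem Bornology.IsBounded.finite_setOf_forall_intCast {I : Type*} [Fintype I]
    {s : Set (I → ℝ)} (hs : Bornology.IsBounded s) : {x ∈ s | ∀ i, ∃ z : ℤ, x i = z}.Finite := by
  refine (ZSpan.setFinite_inter (Pi.basisFun ℝ I) hs).subset fun x hx => ⟨hx.1, ?_⟩
  rw [SetLike.mem_coe, Module.Basis.mem_span_iff_repr_mem]
  intro i
  obtain ⟨z, hz⟩ := hx.2 i
  exact ⟨z, by simp [hz]⟩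

theorem eq_convexHull_of_extremePoints_subset {E : Type*} [AddCommGroup E] [Module ℝ E]
    [TopologicalSpace E] [T2Space E] [IsTopologicalAddGroup E] [ContinuousSMul ℝ E]
    [LocallyConvexSpace ℝ E] {A P : Set E} (hA : IsCompact A) (hAc : Convex ℝ A)
    (hP : P.Finite) (hPA : P ⊆ A) (hext : A.extremePoints ℝ ⊆ P) : A = convexHull ℝ P :=
  (convexHull_min hPA hAc).antisymm' <| calc
    A = closure (convexHull ℝ (A.extremePoints ℝ)) :=
        (closure_convexHull_extremePoints hA hAc).symm
    _ ⊆ closure (convexHull ℝ P) := closure_mono (convexHull_mono hext)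
    _ = convexHull ℝ P := (hP.isClosed_convexHull ℝ).closure_eq

theorem Laminar.exists_int_eq_of_mem_extremePoints {I : Type*} [Fintype I] [DecidableEq I]
    {H₁ H₂ : Finset (Finset I)} (hH₁ : Laminar H₁) (hH₂ : Laminar H₂) {n N : Finset I → ℕ}
    {y : I → ℝ} (hy : y ∈ (marginalPolytope (H₁ ∪ H₂) n N).extremePoints ℝ) :
    ∀ i, ∃ z : ℤ, y i = z := by
  have hG (r : ℝ) : r ∈ (Int.castAddHom ℝ).range ↔ ∃ z : ℤ, r = z := by
    simp only [AddMonoidHom.mem_range, Int.coe_castAddHom, eq_comm]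
  by_contra! hfrac
  obtain ⟨d, hd0, hd, hdS⟩ := Laminar.exists_ne_zero_sum_eq_zero (K := ℝ) (Int.castAddHom ℝ).range
    hH₁ hH₂ (y := y) (by simpa only [hG, not_exists] using hfrac)
  refine notMem_extremePoints_of_eventually hd0
    (eventually_add_smul_mem_marginalPolytope hy.1
      (fun i hi => hd i ((hG _).2 ⟨0, by simp [hi]⟩)) fun S hS htight => hdS S hS ((hG _).2 ?_)) hy
  rcases htight with h | h
  exacts [⟨n S, h⟩, ⟨N S, h⟩]

theorem biHierarchical_implies_implementable_general
    (I : Type*) [Fintype I] [DecidableEq I]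
    (H : Finset (Finset I))
    (H₁ H₂ : Finset (Finset I)) (hH : H = H₁ ∪ H₂)
    (hH₁ : Laminar H₁) (hH₂ : Laminar H₂)
    (nS NS : Finset I → ℕ)
    (MgS : Set (I → ℝ))
    (hMgS : MgS = {x | (∀ i, 0 ≤ x i) ∧
      ∀ S ∈ H, (nS S : ℝ) ≤ ∑ i ∈ S, x i ∧ ∑ i ∈ S, x i ≤ (NS S : ℝ)})
    (hbdd : Bornology.IsBounded MgS)
    (P : Set (I → ℝ))
    (hP : P = {x ∈ MgS | ∀ i, ∃ z : ℤ, x i = (z : ℝ)}) :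
    MgS = convexHull ℝ P := by
  subst hP hMgS hH
  exact eq_convexHull_of_extremePoints_subset
    (Metric.isCompact_of_isClosed_isBounded (isClosed_marginalPolytope _ _ _) hbdd)
    (convex_marginalPolytope _ _ _) hbdd.finite_setOf_forall_intCast (Set.sep_subset _ _)
    fun y hy => ⟨hy.1, hH₁.exists_int_eq_of_mem_extremePoints hH₂ hy⟩

/-- Proposition 1: bi-hierarchical assignment constraints imply that every
marginal strategy is implementable, i.e. the (bounded) marginal polytope is the
convex hull of its integer points. -/
theorem biHierarchical_implies_implementable
    (I : Type*) [Fintype I] [DecidableEq I]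
    (H : Finset (Finset I))
    (H₁ H₂ : Finset (Finset I)) (hH : H = H₁ ∪ H₂)
    (hH₁ : Laminar H₁) (hH₂ : Laminar H₂)
    (nS NS : Finset I → ℕ) (hb : ∀ S ∈ H, nS S ≤ NS S)
    (MgS : Set (I → ℝ))
    (hMgS : MgS = {x | (∀ i, 0 ≤ x i) ∧
      ∀ S ∈ H, (nS S : ℝ) ≤ ∑ i ∈ S, x i ∧ ∑ i ∈ S, x i ≤ (NS S : ℝ)})
    (hbdd : Bornology.IsBounded MgS)
    (P : Set (I → ℝ))
    (hP : P = {x ∈ MgS | ∀ i, ∃ z : ℤ, x i = (z : ℝ)}) :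
    MgS = convexHull ℝ P :=
  biHierarchical_implies_implementable_general I H H₁ H₂ hH hH₁ hH₂ nS NS MgS hMgS hbdd P hP
end
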